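/- Define N(ζ,u) = (n(ζ)^2 + n(u))^{1/4} on the quaternionic Heisenberg group Heis = H^{n-1} × Im(H). Then d((ζ,u),(ζ',u')) = N((ζ,u)^{-1}(ζ',u')) defines a left-invariant distance on Heis (the Cygan distance): it is symmetric, vanishes exactly on the diagonal, and satisfies the triangle inequality. -/

import Mathlib

/-! For `p = (ζ, u)` with `Re u = 0`, the quaternion `A(p) = n(ζ) + u` (`cyganQuat`) has
`|A(p)| = N(p)²`, and `A(pq) = A(p) + A(q) + 2⟨ζ, ζ'⟩`: the cross term `2 Re⟨ζ, ζ'⟩` of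
`n(ζ + ζ')` and the `2 Im⟨ζ, ζ'⟩` of the group law add up to `2⟨ζ, ζ'⟩`. Cauchy–Schwarz and
`n(ζ)^{1/2} ≤ N(p)` bound `|⟨ζ, ζ'⟩|` by `N(p) N(q)`, so `N(pq)² ≤ (N(p) + N(q))²`. With the
inverse `p⁻¹ = -p`, the triangle inequality for `d(x, y) = N(x⁻¹y)` then comes from
`x⁻¹z = (x⁻¹y)(y⁻¹z)`, symmetry from `(x⁻¹y)⁻¹ = y⁻¹x`, and left invariance from
`(gx)⁻¹(gy) = x⁻¹y`. -/

noncomputable section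

open Quaternion

variable (n : ℕ)

/-- The imaginary part `Im x = (x - conj x)/2` of a quaternion. -/
def qIm (x : Quaternion ℝ) : Quaternion ℝ := (x - star x) / 2

/-- The standard quaternionic Hermitian product. -/
def qDot (ζ ζ' : Fin (n - 1) → Quaternion ℝ) : Quaternion ℝ :=
  ∑ p, star (ζ p) * ζ' p

/-- The quaternionic Heisenberg group `Heis = ℍ^{n-1} × Im ℍ`. -/
def HeisN : Set ((Fin (n - 1) → Quaternion ℝ) × Quaternion ℝ) :=
  {p | p.2 + star p.2 = 0}

/-- The group law `(ζ,u)(ζ',u') = (ζ+ζ', u+u'+2 Im(conj(ζ)·ζ'))`. -/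
def heisNMul (p q : (Fin (n - 1) → Quaternion ℝ) × Quaternion ℝ) :
    (Fin (n - 1) → Quaternion ℝ) × Quaternion ℝ :=
  (p.1 + q.1, p.2 + q.2 + 2 * qIm (qDot n p.1 q.1))

/-- The gauge `N(ζ,u) = (n(ζ)² + n(u))^{1/4}`. -/
def heisGauge (p : (Fin (n - 1) → Quaternion ℝ) × Quaternion ℝ) : ℝ :=
  ((∑ i, normSq (p.1 i)) ^ 2 + normSq p.2) ^ ((1 : ℝ) / 4)

/-- The Cygan distance `d(x,y) = N(x⁻¹ y)`, where `(ζ,u)⁻¹ = (-ζ,-u)`. -/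
def dCyg (x y : (Fin (n - 1) → Quaternion ℝ) × Quaternion ℝ) : ℝ :=
  heisGauge n (heisNMul n (-x.1, -x.2) y)

open Finset

lemma qIm_eq_im (z : ℍ[ℝ]) : qIm z = z.im := by
  rw [qIm, show (2 : ℍ[ℝ]) = ((2 : ℝ) : ℍ[ℝ]) by norm_cast,
    div_eq_iff (coe_injective.ne (two_ne_zero : (2 : ℝ) ≠ 0))]
  ext <;> simp <;> ring

section qDot

variable {n}

lemma star_qDot (a b : Fin (n - 1) → ℍ[ℝ]) : star (qDot n a b) = qDot n b a := by
  simp [qDot, star_sum]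

lemma qDot_add_left (a b c : Fin (n - 1) → ℍ[ℝ]) :
    qDot n (a + b) c = qDot n a c + qDot n b c := by
  simp [qDot, add_mul, sum_add_distrib]

lemma qDot_add_right (a b c : Fin (n - 1) → ℍ[ℝ]) :
    qDot n a (b + c) = qDot n a b + qDot n a c := by
  simp [qDot, mul_add, sum_add_distrib]

lemma qDot_neg_left (a b : Fin (n - 1) → ℍ[ℝ]) : qDot n (-a) b = -qDot n a b := by
  simp [qDot]

lemma qDot_neg_right (a b : Fin (n - 1) → ℍ[ℝ]) : qDot n a (-b) = -qDot n a b := by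
  simp [qDot]

lemma qDot_self (a : Fin (n - 1) → ℍ[ℝ]) :
    qDot n a a = ((∑ i, normSq (a i) : ℝ) : ℍ[ℝ]) := by
  simp only [qDot, star_mul_self]
  exact (map_sum (algebraMap ℝ ℍ[ℝ]) (fun i => normSq (a i)) univ).symm

lemma im_qDot_self (a : Fin (n - 1) → ℍ[ℝ]) : (qDot n a a).im = 0 := by
  rw [qDot_self, im_coe]

lemma im_qDot_comm (a b : Fin (n - 1) → ℍ[ℝ]) : (qDot n b a).im = -(qDot n a b).im := by
  rw [← star_qDot, im_star]

lemma norm_qDot_le (a b : Fin (n - 1) → ℍ[ℝ]) :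
    ‖qDot n a b‖ ≤ √(∑ i, normSq (a i)) * √(∑ i, normSq (b i)) :=
  calc ‖qDot n a b‖ ≤ ∑ i, ‖a i‖ * ‖b i‖ := by
        simpa [qDot, norm_mul, norm_star] using norm_sum_le univ fun i => star (a i) * b i
    _ = ∑ i, √(normSq (a i)) * √(normSq (b i)) := by
        simp only [normSq_eq_norm_mul_self, Real.sqrt_mul_self (norm_nonneg _)]
    _ ≤ _ := Real.sum_sqrt_mul_sqrt_le _ (fun _ => normSq_nonneg) (fun _ => normSq_nonneg)

end qDot

section Group

variable {n}

lemma mem_heisN_iff {p : (Fin (n - 1) → ℍ[ℝ]) × ℍ[ℝ]} : p ∈ HeisN n ↔ p.2.re = 0 := by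
  rw [HeisN, Set.mem_ofPred_eq, self_add_star', ← Quaternion.coe_zero, Quaternion.coe_inj]
  simp

lemma heisNMul_mem_heisN {p q : (Fin (n - 1) → ℍ[ℝ]) × ℍ[ℝ]} (hp : p ∈ HeisN n)
    (hq : q ∈ HeisN n) : heisNMul n p q ∈ HeisN n := by
  rw [mem_heisN_iff] at *
  simp [heisNMul, qIm_eq_im, two_mul, hp, hq]

lemma neg_mem_heisN {p : (Fin (n - 1) → ℍ[ℝ]) × ℍ[ℝ]} (hp : p ∈ HeisN n) : -p ∈ HeisN n := by
  rw [mem_heisN_iff] at *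
  simp [hp]

lemma neg_heisNMul_neg_left (x y : (Fin (n - 1) → ℍ[ℝ]) × ℍ[ℝ]) :
    -heisNMul n (-x) y = heisNMul n (-y) x := by
  ext1
  · simp [heisNMul, add_comm]
  · simp only [heisNMul, qIm_eq_im, Prod.fst_neg, Prod.snd_neg, qDot_neg_left, im_neg,
      im_qDot_comm x.1 y.1, mul_neg]
    abel

lemma heisNMul_neg_left_mul_neg_left (x y z : (Fin (n - 1) → ℍ[ℝ]) × ℍ[ℝ]) :
    heisNMul n (heisNMul n (-x) y) (heisNMul n (-y) z) = heisNMul n (-x) z := by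
  ext1
  · simp [heisNMul]
  · simp only [heisNMul, qIm_eq_im, Prod.fst_neg, Prod.snd_neg, qDot_add_left, qDot_add_right,
      qDot_neg_left, qDot_neg_right, im_add, im_neg, im_qDot_self, mul_add, mul_neg,
      mul_zero]
    abel

lemma heisNMul_neg_heisNMul_heisNMul (g x y : (Fin (n - 1) → ℍ[ℝ]) × ℍ[ℝ]) :
    heisNMul n (-heisNMul n g x) (heisNMul n g y) = heisNMul n (-x) y := by
  ext1
  · simp [heisNMul]
  · simp only [heisNMul, qIm_eq_im, Prod.fst_neg, Prod.snd_neg, qDot_add_left, qDot_add_right,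
      qDot_neg_left, im_add, im_neg, im_qDot_self, im_qDot_comm g.1 x.1, mul_add, mul_neg,
      mul_zero, neg_add]
    abel

lemma heisNMul_neg_left_eq_zero_iff {x y : (Fin (n - 1) → ℍ[ℝ]) × ℍ[ℝ]} :
    heisNMul n (-x) y = 0 ↔ x = y := by
  constructor
  · intro h
    have h1 : x.1 = y.1 := by
      simpa [heisNMul, neg_add_eq_zero] using congrArg Prod.fst h
    have h2 : x.2 = y.2 := by
      simpa [heisNMul, h1, qIm_eq_im, qDot_neg_left, im_qDot_self, neg_add_eq_zero]
        using congrArg Prod.snd h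
    exact Prod.ext h1 h2
  · rintro rfl
    simp [heisNMul, qIm_eq_im, qDot_neg_left, im_qDot_self]

end Group

def cyganQuat (p : (Fin (n - 1) → ℍ[ℝ]) × ℍ[ℝ]) : ℍ[ℝ] := qDot n p.1 p.1 + p.2

section Gauge

variable {n}

lemma cyganQuat_heisNMul (p q : (Fin (n - 1) → ℍ[ℝ]) × ℍ[ℝ]) :
    cyganQuat n (heisNMul n p q) = cyganQuat n p + cyganQuat n q + 2 * qDot n p.1 q.1 := by
  simp only [cyganQuat, heisNMul, qDot_add_left, qDot_add_right, qIm_eq_im,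
    ← star_qDot p.1 q.1]
  have h : qDot n p.1 q.1 + star (qDot n p.1 q.1) + 2 * (qDot n p.1 q.1).im
      = 2 * qDot n p.1 q.1 := by
    ext <;> simp [two_mul]
  rw [← h]
  abel

lemma normSq_cyganQuat {p : (Fin (n - 1) → ℍ[ℝ]) × ℍ[ℝ]} (hp : p ∈ HeisN n) :
    normSq (cyganQuat n p) = (∑ i, normSq (p.1 i)) ^ 2 + normSq p.2 := by
  rw [mem_heisN_iff] at hp
  simp only [cyganQuat, qDot_self, normSq_def', re_add, imI_add, imJ_add, imK_add, re_coe,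
    imI_coe, imJ_coe, imK_coe, hp]
  ring

lemma heisGauge_nonneg (p : (Fin (n - 1) → ℍ[ℝ]) × ℍ[ℝ]) : 0 ≤ heisGauge n p :=
  Real.rpow_nonneg (add_nonneg (sq_nonneg _) normSq_nonneg) _

lemma heisGauge_sq {p : (Fin (n - 1) → ℍ[ℝ]) × ℍ[ℝ]} (hp : p ∈ HeisN n) :
    heisGauge n p ^ 2 = ‖cyganQuat n p‖ := by
  rw [heisGauge, ← normSq_cyganQuat hp, ← Real.rpow_natCast, ← Real.rpow_mul normSq_nonneg,
    normSq_eq_norm_mul_self]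
  norm_num [← Real.sqrt_eq_rpow]

lemma sqrt_sum_normSq_le_heisGauge (p : (Fin (n - 1) → ℍ[ℝ]) × ℍ[ℝ]) :
    √(∑ i, normSq (p.1 i)) ≤ heisGauge n p := by
  have hs : 0 ≤ ∑ i, normSq (p.1 i) := sum_nonneg fun _ _ => normSq_nonneg
  calc √(∑ i, normSq (p.1 i)) = ((∑ i, normSq (p.1 i)) ^ 2) ^ ((1 : ℝ) / 4) := by
        rw [Real.sqrt_eq_rpow, ← Real.rpow_natCast, ← Real.rpow_mul hs]
        norm_num
    _ ≤ heisGauge n p :=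
        Real.rpow_le_rpow (sq_nonneg _) (le_add_of_nonneg_right normSq_nonneg) (by norm_num)

lemma norm_qDot_le_heisGauge_mul (p q : (Fin (n - 1) → ℍ[ℝ]) × ℍ[ℝ]) :
    ‖qDot n p.1 q.1‖ ≤ heisGauge n p * heisGauge n q :=
  (norm_qDot_le p.1 q.1).trans <| mul_le_mul (sqrt_sum_normSq_le_heisGauge p)
    (sqrt_sum_normSq_le_heisGauge q) (Real.sqrt_nonneg _) (heisGauge_nonneg p)

lemma heisGauge_heisNMul_le {p q : (Fin (n - 1) → ℍ[ℝ]) × ℍ[ℝ]} (hp : p ∈ HeisN n)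
    (hq : q ∈ HeisN n) : heisGauge n (heisNMul n p q) ≤ heisGauge n p + heisGauge n q := by
  have hsq : heisGauge n (heisNMul n p q) ^ 2 ≤ (heisGauge n p + heisGauge n q) ^ 2 :=
    calc heisGauge n (heisNMul n p q) ^ 2
        = ‖cyganQuat n p + cyganQuat n q + (qDot n p.1 q.1 + qDot n p.1 q.1)‖ := by
          rw [heisGauge_sq (heisNMul_mem_heisN hp hq), cyganQuat_heisNMul, two_mul]
      _ ≤ ‖cyganQuat n p‖ + ‖cyganQuat n q‖ + (‖qDot n p.1 q.1‖ + ‖qDot n p.1 q.1‖) :=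
          (norm_add_le _ _).trans (add_le_add (norm_add_le _ _) (norm_add_le _ _))
      _ ≤ (heisGauge n p + heisGauge n q) ^ 2 := by
          rw [← heisGauge_sq hp, ← heisGauge_sq hq]
          nlinarith [norm_qDot_le_heisGauge_mul p q]
  exact (pow_le_pow_iff_left₀ (heisGauge_nonneg _)
    (add_nonneg (heisGauge_nonneg p) (heisGauge_nonneg q)) two_ne_zero).1 hsq

lemma heisGauge_neg (p : (Fin (n - 1) → ℍ[ℝ]) × ℍ[ℝ]) : heisGauge n (-p) = heisGauge n p := by
  simp [heisGauge]

lemma heisGauge_eq_zero_iff {p : (Fin (n - 1) → ℍ[ℝ]) × ℍ[ℝ]} : heisGauge n p = 0 ↔ p = 0 := by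
  rw [heisGauge, Real.rpow_eq_zero (add_nonneg (sq_nonneg _) normSq_nonneg) (by norm_num),
    add_eq_zero_iff_of_nonneg (sq_nonneg _) normSq_nonneg, pow_eq_zero_iff two_ne_zero,
    sum_eq_zero_iff_of_nonneg fun _ _ => normSq_nonneg]
  simp [Prod.ext_iff, funext_iff]

end Gauge

lemma dCyg_eq_heisGauge (x y : (Fin (n - 1) → ℍ[ℝ]) × ℍ[ℝ]) :
    dCyg n x y = heisGauge n (heisNMul n (-x) y) :=
  rfl

theorem dCyg_is_left_invariant_distance :
    (∀ x ∈ HeisN n, ∀ y ∈ HeisN n, dCyg n x y = dCyg n y x) ∧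
    (∀ x ∈ HeisN n, ∀ y ∈ HeisN n, (dCyg n x y = 0 ↔ x = y)) ∧
    (∀ x ∈ HeisN n, ∀ y ∈ HeisN n, ∀ z ∈ HeisN n,
      dCyg n x z ≤ dCyg n x y + dCyg n y z) ∧
    (∀ g ∈ HeisN n, ∀ x ∈ HeisN n, ∀ y ∈ HeisN n,
      dCyg n (heisNMul n g x) (heisNMul n g y) = dCyg n x y) := by
  simp only [dCyg_eq_heisGauge]
  refine ⟨fun x _ y _ => ?_, fun x _ y _ => ?_, fun x hx y hy z hz => ?_, fun g _ x _ y _ => ?_⟩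
  · rw [← neg_heisNMul_neg_left, heisGauge_neg]
  · rw [heisGauge_eq_zero_iff, heisNMul_neg_left_eq_zero_iff]
  · rw [← heisNMul_neg_left_mul_neg_left x y z]
    exact heisGauge_heisNMul_le (heisNMul_mem_heisN (neg_mem_heisN hx) hy)
      (heisNMul_mem_heisN (neg_mem_heisN hy) hz)
  · rw [heisNMul_neg_heisNMul_heisNMul]
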